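/- Let α, β be probability vectors with strictly positive entries (Schmidt coefficients of states ψ, φ). Define P(ψ→φ) = min_ℓ E_ℓ(α)/E_ℓ(β) and P(φ→ψ) = min_ℓ E_ℓ(β)/E_ℓ(α), where E_ℓ(x) is the tail sum from index ℓ of the decreasingly sorted vector. If P(ψ→φ) < P(φ→ψ), then at the index ℓ minimizing E_ℓ(α)/E_ℓ(β), one has ln(β_ℓ/α_ℓ) > 0, i.e., the ℓ-th component of the affinity difference A_ℓ(ρ_ψ) - A_ℓ(ρ_φ) = ln(β_ℓ/α_ℓ) is positive. -/
import Mathlib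


/-- Tail sum `E ℓ x = ∑_{i=ℓ}^{n-1} x i` (vector assumed sorted nonincreasingly). -/
noncomputable def tailSum {n : ℕ} (x : Fin n → ℝ) (ℓ : Fin n) : ℝ :=
  ∑ i ∈ Finset.univ.filter (fun i => ℓ ≤ i), x i

lemma tailSum_split {n : ℕ} (x : Fin n → ℝ) (ℓ : Fin n) :
    tailSum x ℓ = x ℓ + ∑ i ∈ Finset.univ.filter (fun i => ℓ < i), x i := by
  unfold tailSum
  have h : Finset.univ.filter (fun i => ℓ ≤ i)
      = insert ℓ (Finset.univ.filter (fun i : Fin n => ℓ < i)) := by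
    ext i
    simp only [Finset.mem_filter, Finset.mem_univ, true_and, Finset.mem_insert]
    constructor
    · intro h; rcases eq_or_lt_of_le h with h | h
      · exact Or.inl h.symm
      · exact Or.inr h
    · rintro (rfl | h)
      · exact le_refl _
      · exact le_of_lt h
  rw [h, Finset.sum_insert (by simp)]

theorem stmt5 {n : ℕ} (α β : Fin n → ℝ)
    (hαpos : ∀ i, 0 < α i) (hβpos : ∀ i, 0 < β i)
    (hα : ∑ i, α i = 1) (hβ : ∑ i, β i = 1)
    (hαsort : ∀ i j : Fin n, i ≤ j → α j ≤ α i)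
    (hβsort : ∀ i j : Fin n, i ≤ j → β j ≤ β i)
    (ℓ : Fin n)
    -- `ℓ` minimizes `E ℓ (α) / E ℓ (β)`, i.e. it attains `P(ψ → φ)`
    (hmin : ∀ m : Fin n, tailSum α ℓ / tailSum β ℓ ≤ tailSum α m / tailSum β m)
    -- `P(ψ → φ)  < P(φ → ψ)`
    (hlt : ∀ m : Fin n, tailSum α ℓ / tailSum β ℓ < tailSum β m / tailSum α m) :
    0 < Real.log (β ℓ / α ℓ) := by
  have hab : α ℓ < β ℓ := by
    set S := Finset.univ.filter (fun i : Fin n => ℓ < i) with hS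
    set a := ∑ i ∈ S, α i with ha
    set b := ∑ i ∈ S, β i with hb
    have hta : tailSum α ℓ = α ℓ + a := tailSum_split α ℓ
    have htb : tailSum β ℓ = β ℓ + b := tailSum_split β ℓ
    have hαℓ := hαpos ℓ
    have hβℓ := hβpos ℓ
    have ha0 : 0 ≤ a := Finset.sum_nonneg fun i _ => (hαpos i).le
    have hb0 : 0 ≤ b := Finset.sum_nonneg fun i _ => (hβpos i).le
    have hta0 : 0 < α ℓ + a := by linarith
    have htb0 : 0 < β ℓ + b := by linarith
    have hℓ := hlt ℓ
    rw [hta, htb] at hℓ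
    rw [div_lt_div_iff₀ htb0 hta0] at hℓ
    -- (αℓ+a)² < (βℓ+b)²  ⇒  αℓ+a < βℓ+b
    have hsum : α ℓ + a < β ℓ + b := by nlinarith
    rcases Finset.eq_empty_or_nonempty S with hSe | hSne
    · have : a = 0 := by rw [ha, hSe, Finset.sum_empty]
      have hbz : b = 0 := by rw [hb, hSe, Finset.sum_empty]
      linarith
    · obtain ⟨m, hm⟩ := hSne
      have hℓm : ℓ < m := (Finset.mem_filter.mp hm).2
      have hℓn : (ℓ : ℕ) + 1 < n := by
        have := m.isLt
        have := (Fin.lt_def.mp hℓm)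
        omega
      set m' : Fin n := ⟨(ℓ : ℕ) + 1, hℓn⟩ with hm'
      have hfilt : Finset.univ.filter (fun i : Fin n => m' ≤ i) = S := by
        apply Finset.filter_congr
        intro i _
        simp only [Fin.le_def, Fin.lt_def, hm', eq_iff_iff]
        omega
      have hta' : tailSum α m' = a := by rw [tailSum, hfilt]
      have htb' : tailSum β m' = b := by rw [tailSum, hfilt]
      have hapos : 0 < a := Finset.sum_pos (fun i _ => hαpos i) ⟨m, hm⟩
      have hbpos : 0 < b := Finset.sum_pos (fun i _ => hβpos i) ⟨m, hm⟩
      have hm1 := hmin m'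
      rw [hta, htb, hta', htb'] at hm1
      rw [div_le_div_iff₀ htb0 hbpos] at hm1
      -- (αℓ+a) b ≤ a (βℓ+b) ⇒ αℓ b ≤ a βℓ
      by_contra h
      push_neg at h
      nlinarith
  have : 1 < β ℓ / α ℓ := (one_lt_div (hαpos ℓ)).mpr hab
  exact Real.log_pos this
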